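/- arXiv:2203.03314 — 2 statements merged into one kernel-verified Lean document; each statement's English description precedes it below -/
import Mathlib

section
/- Let α, β₀ ∈ (0,1), β = β₀, β₂ = 1 - β₀, and θ₀ = ((β₂ - β₀)d + 1)/n for positive integers d, n with d < n. If β₀ > 2α and the inequality β + 3(β₀ - √(2β₀α)) < θ₀ holds together with β₀ - √(2αβ₀) ≥ √(d-1)/d, then d + 1 > 2αn. -/
/-! Since `β₀ > 2α`, the gap `β₀ - √(2β₀α)` is positive, so the hypothesis forces
`θ₀ > β₀ > 2α`; and `θ₀ ≤ (d + 1) / n` because `β₀ ≥ 0`. -/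

lemma Real.sqrt_two_mul_mul_lt_self {a b : ℝ} (ha : 0 < a) (hab : 2 * b < a) :
    √(2 * a * b) < a := by
  rw [Real.sqrt_lt' ha]
  nlinarith

theorem stmt_7_general (α β₀ : ℝ) (d n : ℕ) (hdn : d < n)
    (hβ₀ : 0 < β₀)
    (β β₂ θ₀ : ℝ) (hβ : β = β₀) (hβ₂ : β₂ = 1 - β₀)
    (hθ₀ : θ₀ = ((β₂ - β₀) * d + 1) / n)
    (h2α : β₀ > 2 * α)
    (h16 : β + 3 * (β₀ - Real.sqrt (2 * β₀ * α)) < θ₀) :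
    (d : ℝ) + 1 > 2 * α * n := by
  subst β β₂ θ₀
  have hn : (0 : ℝ) < n := by exact_mod_cast d.zero_le.trans_lt hdn
  have hgap : 0 < β₀ - √(2 * β₀ * α) := sub_pos.2 (Real.sqrt_two_mul_mul_lt_self hβ₀ h2α)
  have hθ : 2 * α < ((1 - β₀ - β₀) * d + 1) / n := by linarith
  rw [lt_div_iff₀ hn] at hθ
  nlinarith [mul_nonneg hβ₀.le (Nat.cast_nonneg (α := ℝ) d)]

theorem stmt_7 (α β₀ : ℝ) (d n : ℕ) (hd : 0 < d) (hdn : d < n)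
    (hα : 0 < α) (hα1 : α < 1) (hβ₀ : 0 < β₀) (hβ₀1 : β₀ < 1)
    (β β₂ θ₀ : ℝ) (hβ : β = β₀) (hβ₂ : β₂ = 1 - β₀)
    (hθ₀ : θ₀ = ((β₂ - β₀) * d + 1) / n)
    (h2α : β₀ > 2 * α)
    (h16 : β + 3 * (β₀ - Real.sqrt (2 * β₀ * α)) < θ₀)
    (h15 : β₀ - Real.sqrt (2 * α * β₀) ≥ Real.sqrt ((d : ℝ) - 1) / d) :
    (d : ℝ) + 1 > 2 * α * n :=
  stmt_7_general α β₀ d n hdn hβ₀ β β₂ θ₀ hβ hβ₂ hθ₀ h2α h16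
end

section
/- Let V be a finite set of n vertices with neighbor structure N : V → Finset V in a d-regular graph, β, β₀ ∈ (0,1) with β ≥ β₀, and let Z = Z(T, β₀) be the closure of T as above, with P = V \ (Z ∪ T). Consider the monotone propagation dynamics x : ℕ → V → {0,1} where a vertex i ∉ supports gets excited at time k+1 iff at least βd of its neighbors are excited at time k, faulty vertices in T may report arbitrary values, and x restricted to P is 0 at time 0. If every vertex of P has fewer than β₀d neighbors outside P, then no vertex of P is ever excited: x_i(k) = 0 for all i ∈ P and all k. -/
/-! By induction on time: while `P` is quiet, every excited neighbour of a node of `P` lies outside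
`P`, and there are fewer than `β₀ d ≤ β d` of those, so no node of `P` reaches the threshold. The
faulty nodes of `T` lie outside `P`, so whatever they report is already counted among these. -/

section ThresholdDynamics

variable {V : Type*} [DecidableEq V]

theorem card_filter_eq_true_le_card_filter_notMem (s P : Finset V) (y : V → Bool)
    (hy : ∀ j ∈ P, y j = false) :
    (s.filter (fun j => y j = true)).card ≤ (s.filter (fun j => j ∉ P)).card :=
  Finset.card_le_card <| Finset.monotone_filter_right s fun j _ hexcited hjP => by
    simp [hy j hjP] at hexcited

theorem threshold_dynamics_eq_false_of_card_outside_lt (N : V → Finset V) (θ : ℝ)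
    (T P : Finset V) (hPT : ∀ i ∈ P, i ∉ T)
    (hout : ∀ i ∈ P, (((N i).filter (fun j => j ∉ P)).card : ℝ) < θ)
    (x : ℕ → V → Bool) (h0 : ∀ i ∈ P, x 0 i = false)
    (hdyn : ∀ k, ∀ i ∉ T, x (k + 1) i = true →
      x k i = true ∨ θ ≤ (((N i).filter (fun j => x k j = true)).card : ℝ)) :
    ∀ k, ∀ i ∈ P, x k i = false := by
  intro k
  induction k with
  | zero => exact h0
  | succ k ih =>
    intro i hi
    rw [Bool.eq_false_iff]
    intro hexcited
    rcases hdyn k i (hPT i hi) hexcited with hstay | hthreshold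
    · simp [ih i hi] at hstay
    · have hcount : (((N i).filter (fun j => x k j = true)).card : ℝ) ≤
          ((N i).filter (fun j => j ∉ P)).card := by
        exact_mod_cast card_filter_eq_true_le_card_filter_notMem (N i) P (x k) ih
      linarith [hout i hi]

end ThresholdDynamics

theorem stmt_14_general {V : Type*} [Fintype V] [DecidableEq V]
    (N : V → Finset V) (d : ℕ)
    (β β₀ : ℝ)
    (hββ₀ : β ≥ β₀)
    (T Z P : Finset V) (hP : P = Finset.univ \ (Z ∪ T))
    (hout : ∀ i ∈ P, ((((N i).erase i).filter (fun j => j ∉ P)).card : ℝ) < β₀ * d)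
    (x : ℕ → V → Bool)
    (h0 : ∀ i ∈ P, x 0 i = false)
    (hdyn : ∀ k : ℕ, ∀ i : V, i ∉ T →
      (x (k + 1) i = true ↔ (x k i = true ∨
        (β * d : ℝ) ≤ ((((N i).erase i).filter (fun j => x k j = true)).card : ℝ)))) :
    ∀ k : ℕ, ∀ i ∈ P, x k i = false := by
  have hPT : ∀ i ∈ P, i ∉ T := fun i hi hiT => by simp [hP, hiT] at hi
  have hβd : β₀ * d ≤ β * d := mul_le_mul_of_nonneg_right hββ₀ (Nat.cast_nonneg d)
  exact threshold_dynamics_eq_false_of_card_outside_lt (fun i => (N i).erase i) (β * d) T P hPT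
    (fun i hi => (hout i hi).trans_le hβd) x h0 (fun k i hi => (hdyn k i hi).mp)

theorem stmt_14 {V : Type*} [Fintype V] [DecidableEq V] (n : ℕ) (hn : Fintype.card V = n)
    (N : V → Finset V) (hN : ∀ i : V, i ∈ N i) (d : ℕ) (hd : 1 ≤ d)
    (β β₀ : ℝ) (hβ : 0 < β) (hβ1 : β < 1) (hβ₀ : 0 < β₀) (hβ₀1 : β₀ < 1)
    (hββ₀ : β ≥ β₀)
    (T Z P : Finset V) (hP : P = Finset.univ \ (Z ∪ T))
    (hout : ∀ i ∈ P, ((((N i).erase i).filter (fun j => j ∉ P)).card : ℝ) < β₀ * d)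
    (x : ℕ → V → Bool)
    (h0 : ∀ i ∈ P, x 0 i = false)
    (hdyn : ∀ k : ℕ, ∀ i : V, i ∉ T →
      (x (k + 1) i = true ↔ (x k i = true ∨
        (β * d : ℝ) ≤ ((((N i).erase i).filter (fun j => x k j = true)).card : ℝ)))) :
    ∀ k : ℕ, ∀ i ∈ P, x k i = false :=
  stmt_14_general N d β β₀ hββ₀ T Z P hP hout x h0 hdyn
end
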